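/- arXiv:1610.07361 — 2 statements merged into one kernel-verified Lean document; each statement's English description precedes it below -/
import Mathlib

section
/- Let γ, u, v > 0. Then γ/u - (γ/u + v/u²) · log(γu/v + 1) ≤ - (γ²/(2v)) · (1 - γu/v). -/
lemma quad_le_log_one_add {t : ℝ} (ht : 0 ≤ t) : t - t ^ 2 / 2 ≤ Real.log (1 + t) := by
  set f : ℝ → ℝ := fun x => Real.log (1 + x) - (x - x ^ 2 / 2) with hf
  have hd : ∀ x : ℝ, 0 < x → HasDerivAt f ((1 + x)⁻¹ - (1 - 2 * x / 2)) x := by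
    intro x hx
    have h1 : (0:ℝ) < 1 + x := by linarith
    have h2 : HasDerivAt (fun x : ℝ => 1 + x) 1 x := by
      simpa using (hasDerivAt_id x).const_add 1
    have hlog := (Real.hasDerivAt_log h1.ne').comp x h2
    have hpoly : HasDerivAt (fun x : ℝ => x - x ^ 2 / 2) (1 - 2 * x / 2) x := by
      exact ((hasDerivAt_id' x).sub ((hasDerivAt_pow 2 x).div_const 2)).congr_deriv (by norm_num)
    exact (hlog.sub hpoly).congr_deriv (by ring)
  have key : MonotoneOn f (Set.Ici 0) := by
    apply monotoneOn_of_deriv_nonneg (convex_Ici 0)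
    · apply ContinuousOn.sub
      · apply Real.continuousOn_log.comp (by fun_prop)
        intro x hx
        simp only [Set.mem_Ici] at hx
        simp only [Set.mem_compl_iff, Set.mem_singleton_iff]
        intro h; linarith
      · fun_prop
    · intro x hx
      simp only [interior_Ici, Set.mem_Ioi] at hx
      exact (hd x hx).differentiableAt.differentiableWithinAt
    · intro x hx
      simp only [interior_Ici, Set.mem_Ioi] at hx
      rw [(hd x hx).deriv]
      have h1 : (0:ℝ) < 1 + x := by linarith
      rw [sub_nonneg, inv_eq_one_div, le_div_iff₀ h1]
      nlinarith
  have h0 : f 0 ≤ f t := key (by simp) (by simpa using ht) ht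
  simp only [hf] at h0
  norm_num at h0
  linarith

theorem haeusler_exponent_bound (γ u v : ℝ) (hγ : 0 < γ) (hu : 0 < u) (hv : 0 < v) :
    γ / u - (γ / u + v / u ^ 2) * Real.log (γ * u / v + 1) ≤
      -(γ ^ 2 / (2 * v)) * (1 - γ * u / v) := by
  have ht : (0:ℝ) ≤ γ * u / v := by positivity
  have hlog := quad_le_log_one_add ht
  rw [add_comm (γ * u / v) 1] at *
  have hc : 0 < γ / u + v / u ^ 2 := by positivity
  have h2 : γ / u - (γ / u + v / u ^ 2) * Real.log (1 + γ * u / v) ≤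
      γ / u - (γ / u + v / u ^ 2) * (γ * u / v - (γ * u / v) ^ 2 / 2) := by
    nlinarith
  refine h2.trans ?_
  field_simp
  ring_nf
  nlinarith [sq_nonneg γ, sq_nonneg u, sq_nonneg v, mul_pos hγ hu, mul_pos hu hv]
end

section
/- Let (d_k)_{1≤k≤n} be martingale differences adapted to a filtration (F_k)_{0≤k≤n} with |d_k| ≤ c almost surely for all k, and let M_k = d_1 + ⋯ + d_k. Then for any y > 0 and v > 0, P( max_{1≤k≤n} M_k ≥ y, Σ_{i=1}^n E(d_i² | F_{i−1}) ≤ v ) ≤ exp( (y/c) − ((y/c) + (v/c²)) · log( yc/v + 1 ) ). -/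
open MeasureTheory

lemma real_exp_eq_tsum (x : ℝ) : Real.exp x = ∑' n, x ^ n / n.factorial := by
  rw [Real.exp_eq_exp_ℝ, NormedSpace.exp_eq_tsum_div]

lemma exp_sub_eq_tsum (x : ℝ) :
    Real.exp x - 1 - x = ∑' n : ℕ, x ^ (n + 2) / (n + 2).factorial := by
  have hs := Real.summable_pow_div_factorial x
  have h := Summable.sum_add_tsum_nat_add 2 hs
  rw [real_exp_eq_tsum x, ← h]
  simp [Finset.sum_range_succ]
  ring

set_option maxHeartbeats 1000000 in
lemma aux_exp_bound {u U : ℝ} (hU : 0 < U) (h : |u| ≤ U) :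
    Real.exp u ≤ 1 + u + u ^ 2 / U ^ 2 * (Real.exp U - 1 - U) := by
  have hsum1 : Summable (fun n : ℕ => u ^ (n + 2) / (n + 2).factorial) :=
    (summable_nat_add_iff 2).2 (Real.summable_pow_div_factorial u)
  have hsum2 : Summable (fun n : ℕ => U ^ (n + 2) / (n + 2).factorial) :=
    (summable_nat_add_iff 2).2 (Real.summable_pow_div_factorial U)
  have key : Real.exp u - 1 - u ≤ u ^ 2 / U ^ 2 * (Real.exp U - 1 - U) := by
    rw [exp_sub_eq_tsum, exp_sub_eq_tsum, ← tsum_mul_left]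
    refine Summable.tsum_le_tsum (fun n => ?_) hsum1 (hsum2.mul_left _)
    have h1 : u ^ (n + 2) ≤ u ^ 2 * U ^ n := by
      calc u ^ (n + 2) ≤ |u ^ (n + 2)| := le_abs_self _
        _ = |u| ^ 2 * |u| ^ n := by rw [abs_pow]; ring
        _ ≤ |u| ^ 2 * U ^ n := by
            have := abs_nonneg u
            gcongr
        _ = u ^ 2 * U ^ n := by rw [sq_abs]
    have h2 : u ^ 2 / U ^ 2 * (U ^ (n + 2) / (n + 2).factorial)
        = u ^ 2 * U ^ n / (n + 2).factorial := by
      field_simp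
      ring
    rw [h2]
    have : (0:ℝ) < (n + 2).factorial := by positivity
    gcongr
  linarith

set_option maxHeartbeats 2000000 in
theorem freedman_exponential_inequality {Ω : Type*} {m : MeasurableSpace Ω}
    (μ : Measure Ω) [IsProbabilityMeasure μ] (ℱ : Filtration ℕ m)
    (n : ℕ) (hn : 1 ≤ n) (c : ℝ) (hc : 0 < c)
    (d : ℕ → Ω → ℝ)
    (hadapted : ∀ k, StronglyMeasurable[ℱ k] (d k))
    (hint : ∀ k, Integrable (d k) μ)
    (hmds : ∀ k, 1 ≤ k → μ[d k | ℱ (k - 1)] =ᵐ[μ] 0)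
    (hbdd : ∀ k, ∀ᵐ ω ∂μ, |d k ω| ≤ c)
    (y v : ℝ) (hy : 0 < y) (hv : 0 < v) :
    (μ ({ω | ∃ k ∈ Finset.Icc 1 n, y ≤ ∑ j ∈ Finset.Icc 1 k, d j ω} ∩
        {ω | ∑ i ∈ Finset.Icc 1 n, (μ[fun ω' => (d i ω') ^ 2 | ℱ (i - 1)]) ω ≤ v})).toReal ≤
      Real.exp (y / c - (y / c + v / c ^ 2) * Real.log (y * c / v + 1)) := by
  -- parameters
  set L : ℝ := Real.log (y * c / v + 1) with hL_def
  have hycv : 0 < y * c / v := by positivity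
  have hL : 0 < L := Real.log_pos (by linarith)
  have hexpL : Real.exp L = y * c / v + 1 := Real.exp_log (by linarith)
  set l : ℝ := L / c with hl_def
  have hl : 0 < l := div_pos hL hc
  have hlc : l * c = L := div_mul_cancel₀ _ hc.ne'
  set g : ℝ := (Real.exp (l * c) - 1 - l * c) / c ^ 2 with hg_def
  have hg0 : 0 ≤ g := by
    have := Real.add_one_le_exp (l * c)
    have hc2 : (0:ℝ) < c ^ 2 := by positivity
    rw [hg_def]
    apply div_nonneg _ hc2.le
    linarith
  -- processes
  set f : ℕ → Ω → ℝ := fun k ω => ∑ j ∈ Finset.Icc 1 k, d j ω with hf_def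
  set X : ℕ → Ω → ℝ := fun i => μ[fun ω' => (d i ω') ^ 2 | ℱ (i - 1)] with hX_def
  set V : ℕ → Ω → ℝ := fun k ω => ∑ i ∈ Finset.Icc 1 k, X i ω with hV_def
  set S : ℕ → Ω → ℝ := fun k ω => Real.exp (l * f k ω - g * V k ω) with hS_def
  -- measurability
  have hfadapted : StronglyAdapted ℱ f := fun k =>
    Finset.stronglyMeasurable_fun_sum _ fun j hj =>
      (hadapted j).mono (ℱ.mono (Finset.mem_Icc.mp hj).2)
  have hXmeas : ∀ i, StronglyMeasurable[ℱ (i - 1)] (X i) := fun i => stronglyMeasurable_condExp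
  have hVmeas : ∀ k j : ℕ, k ≤ j + 1 → StronglyMeasurable[ℱ j] (V k) := by
    intro k j hkj
    refine Finset.stronglyMeasurable_fun_sum _ fun i hi => (hXmeas i).mono (ℱ.mono ?_)
    have := (Finset.mem_Icc.mp hi).2
    omega
  have hSadapted : StronglyAdapted ℱ S := by
    intro k
    exact Real.continuous_exp.comp_stronglyMeasurable
      (((hfadapted k).const_mul l).sub ((hVmeas k k k.le_succ).const_mul g))
  -- a.e. facts
  have hXnn : ∀ᵐ ω ∂μ, ∀ i, 0 ≤ X i ω := by
    rw [ae_all_iff]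
    intro i
    exact condExp_nonneg (ae_of_all _ fun ω' => sq_nonneg _)
  have hdbdd : ∀ᵐ ω ∂μ, ∀ k, |d k ω| ≤ c := ae_all_iff.2 hbdd
  have hfabs : ∀ᵐ ω ∂μ, ∀ k, |f k ω| ≤ k * c := by
    filter_upwards [hdbdd] with ω h1 k
    calc |f k ω| ≤ ∑ j ∈ Finset.Icc 1 k, |d j ω| := Finset.abs_sum_le_sum_abs _ _
      _ ≤ ∑ j ∈ Finset.Icc 1 k, c := Finset.sum_le_sum fun j _ => h1 j
      _ = k * c := by
          rw [Finset.sum_const, Nat.card_Icc]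
          simp [nsmul_eq_mul]
  have hSbdd : ∀ k, ∀ᵐ ω ∂μ, ‖S k ω‖ ≤ Real.exp (l * (k * c)) := by
    intro k
    filter_upwards [hfabs, hXnn] with ω h1 h2
    have hVnn : 0 ≤ V k ω := Finset.sum_nonneg fun i _ => h2 i
    have : S k ω = Real.exp (l * f k ω - g * V k ω) := rfl
    rw [Real.norm_eq_abs, this, abs_of_pos (Real.exp_pos _), Real.exp_le_exp]
    have : l * f k ω ≤ l * (k * c) :=
      mul_le_mul_of_nonneg_left (le_trans (le_abs_self _) (h1 k)) hl.le
    nlinarith [mul_nonneg hg0 hVnn]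
  have hSint : ∀ k, Integrable (S k) μ := fun k =>
    Integrable.mono' (integrable_const _)
      ((hSadapted k).mono (ℱ.le k)).aestronglyMeasurable (hSbdd k)
  -- one-step supermartingale estimate
  have hstep : ∀ i : ℕ, μ[S (i + 1) | ℱ i] ≤ᵐ[μ] S i := by
    intro i
    have hXi : StronglyMeasurable[ℱ i] (X (i + 1)) := hXmeas (i + 1)
    -- splitting
    have hsplit : S (i + 1) = (fun ω => S i ω * Real.exp (-(g * X (i + 1) ω))) *
        fun ω => Real.exp (l * d (i + 1) ω) := by
      funext ω
      show Real.exp (l * f (i + 1) ω - g * V (i + 1) ω) = _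
      have h1 : f (i + 1) ω = f i ω + d (i + 1) ω :=
        Finset.sum_Icc_succ_top (Nat.le_add_left 1 i) _
      have h2 : V (i + 1) ω = V i ω + X (i + 1) ω :=
        Finset.sum_Icc_succ_top (Nat.le_add_left 1 i) _
      have h3 : l * f (i + 1) ω - g * V (i + 1) ω =
          (l * f i ω - g * V i ω) + (-(g * X (i + 1) ω)) + l * d (i + 1) ω := by
        rw [h1, h2]; ring
      rw [h3, Real.exp_add, Real.exp_add]
      rfl
    -- the predictable factor
    have hφmeas : StronglyMeasurable[ℱ i] fun ω => S i ω * Real.exp (-(g * X (i + 1) ω)) :=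
      (hSadapted i).mul
        (Real.continuous_exp.comp_stronglyMeasurable (hXi.const_mul g).neg)
    have hφbdd : ∀ᵐ ω ∂μ, ‖S i ω * Real.exp (-(g * X (i + 1) ω))‖ ≤ Real.exp (l * (i * c)) := by
      filter_upwards [hSbdd i, hXnn] with ω h1 h2
      rw [norm_mul]
      have hle1 : Real.exp (-(g * X (i + 1) ω)) ≤ 1 := by
        rw [Real.exp_le_one_iff]
        have := mul_nonneg hg0 (h2 (i + 1))
        linarith
      calc ‖S i ω‖ * ‖Real.exp (-(g * X (i + 1) ω))‖ ≤ ‖S i ω‖ * 1 := by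
            apply mul_le_mul_of_nonneg_left _ (norm_nonneg _)
            rw [Real.norm_eq_abs, abs_of_pos (Real.exp_pos _)]
            exact hle1
        _ ≤ Real.exp (l * (i * c)) := by rw [mul_one]; exact h1
    have hemeas : AEStronglyMeasurable (fun ω => Real.exp (l * d (i + 1) ω)) μ :=
      (Real.continuous_exp.comp_stronglyMeasurable
        (((hadapted (i + 1)).mono (ℱ.le _)).const_mul l)).aestronglyMeasurable
    have heint : Integrable (fun ω => Real.exp (l * d (i + 1) ω)) μ := by
      refine Integrable.mono' (integrable_const (Real.exp (l * c))) hemeas ?_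
      filter_upwards [hbdd (i + 1)] with ω h1
      rw [Real.norm_eq_abs, abs_of_pos (Real.exp_pos _), Real.exp_le_exp]
      exact mul_le_mul_of_nonneg_left (le_trans (le_abs_self _) h1) hl.le
    -- pull-out property
    have hpull : μ[S (i + 1) | ℱ i] =ᵐ[μ]
        (fun ω => S i ω * Real.exp (-(g * X (i + 1) ω))) *
          μ[fun ω => Real.exp (l * d (i + 1) ω) | ℱ i] := by
      rw [hsplit]
      exact condExp_stronglyMeasurable_mul_of_bound (ℱ.le i) hφmeas heint _ hφbdd
    -- conditional mgf estimate
    have hcond : μ[fun ω => Real.exp (l * d (i + 1) ω) | ℱ i] ≤ᵐ[μ]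
        fun ω => 1 + g * X (i + 1) ω := by
      have hq : Integrable (fun ω => (d (i + 1) ω) ^ 2) μ := by
        refine Integrable.mono' (integrable_const (c ^ 2))
          ((((hadapted (i + 1)).mono (ℱ.le _)).pow 2).aestronglyMeasurable) ?_
        filter_upwards [hbdd (i + 1)] with ω h1
        rw [Real.norm_eq_abs, abs_pow]
        exact pow_le_pow_left₀ (abs_nonneg _) h1 2
      have hrhs : Integrable (fun ω => 1 + l * d (i + 1) ω + g * (d (i + 1) ω) ^ 2) μ :=
        ((integrable_const (1:ℝ)).add ((hint (i + 1)).const_mul l)).add (hq.const_mul g)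
      have hle : (fun ω => Real.exp (l * d (i + 1) ω)) ≤ᵐ[μ]
          fun ω => 1 + l * d (i + 1) ω + g * (d (i + 1) ω) ^ 2 := by
        filter_upwards [hbdd (i + 1)] with ω h1
        have habs : |l * d (i + 1) ω| ≤ l * c := by
          rw [abs_mul, abs_of_pos hl]
          exact mul_le_mul_of_nonneg_left h1 hl.le
        have hb := aux_exp_bound (by positivity : (0:ℝ) < l * c) habs
        have hq2 : (l * d (i + 1) ω) ^ 2 / (l * c) ^ 2 *
            (Real.exp (l * c) - 1 - l * c) = g * (d (i + 1) ω) ^ 2 := by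
          rw [hg_def]
          field_simp
        calc Real.exp (l * d (i + 1) ω) ≤ 1 + l * d (i + 1) ω +
              (l * d (i + 1) ω) ^ 2 / (l * c) ^ 2 * (Real.exp (l * c) - 1 - l * c) := hb
          _ = 1 + l * d (i + 1) ω + g * (d (i + 1) ω) ^ 2 := by rw [hq2]
      have h1 := condExp_mono heint hrhs hle (m := ℱ i)
      -- compute the conditional expectation of the RHS
      have h2 : μ[fun ω => 1 + l * d (i + 1) ω + g * (d (i + 1) ω) ^ 2 | ℱ i] =ᵐ[μ]
          fun ω => 1 + g * X (i + 1) ω := by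
        have e1 : (fun ω => 1 + l * d (i + 1) ω + g * (d (i + 1) ω) ^ 2) =
            ((fun _ => (1:ℝ)) + l • d (i + 1)) + g • fun ω => (d (i + 1) ω) ^ 2 := rfl
        rw [e1]
        have h3 := condExp_add (m := ℱ i) (μ := μ)
          ((integrable_const (1:ℝ)).add ((hint (i + 1)).smul l)) (hq.smul g)
        have h4 := condExp_add (m := ℱ i) (μ := μ) (integrable_const (1:ℝ))
          ((hint (i + 1)).smul l)
        have h5 := condExp_smul (m := ℱ i) (μ := μ) l (d (i + 1))
        have h6 := condExp_smul (m := ℱ i) (μ := μ) g (fun ω => (d (i + 1) ω) ^ 2)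
        have h7 : μ[d (i + 1) | ℱ i] =ᵐ[μ] 0 := hmds (i + 1) (Nat.le_add_left 1 i)
        have h8 : μ[fun ω => (d (i + 1) ω) ^ 2 | ℱ i] = X (i + 1) := rfl
        have h9 : μ[fun _ => (1:ℝ) | ℱ i] = fun _ => (1:ℝ) := condExp_const (ℱ.le i) 1
        filter_upwards [h3, h4, h5, h6, h7] with ω e3 e4 e5 e6 e7
        simp only [Pi.add_apply, Pi.smul_apply, smul_eq_mul] at e3 e4 e5 e6 ⊢
        rw [e3, e4, e5, e6, h9, h8, e7]
        simp
      calc μ[fun ω => Real.exp (l * d (i + 1) ω) | ℱ i]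
          ≤ᵐ[μ] μ[fun ω => 1 + l * d (i + 1) ω + g * (d (i + 1) ω) ^ 2 | ℱ i] := h1
        _ =ᵐ[μ] fun ω => 1 + g * X (i + 1) ω := h2
    -- combine
    filter_upwards [hpull, hcond, hXnn] with ω e1 e2 e3
    rw [e1]
    simp only [Pi.mul_apply]
    have hXnn' : 0 ≤ X (i + 1) ω := e3 (i + 1)
    have hSpos : 0 < S i ω := Real.exp_pos _
    have hstep1 : S i ω * Real.exp (-(g * X (i + 1) ω)) *
        (μ[fun ω => Real.exp (l * d (i + 1) ω) | ℱ i]) ω ≤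
        S i ω * Real.exp (-(g * X (i + 1) ω)) * (1 + g * X (i + 1) ω) := by
      apply mul_le_mul_of_nonneg_left e2
      positivity
    refine le_trans hstep1 ?_
    have hkey : Real.exp (-(g * X (i + 1) ω)) * (1 + g * X (i + 1) ω) ≤ 1 := by
      rw [Real.exp_neg]
      rw [inv_mul_le_iff₀ (Real.exp_pos _), mul_one]
      have := Real.add_one_le_exp (g * X (i + 1) ω)
      linarith
    calc S i ω * Real.exp (-(g * X (i + 1) ω)) * (1 + g * X (i + 1) ω)
        = S i ω * (Real.exp (-(g * X (i + 1) ω)) * (1 + g * X (i + 1) ω)) := by ring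
      _ ≤ S i ω * 1 := mul_le_mul_of_nonneg_left hkey hSpos.le
      _ = S i ω := mul_one _
  -- the supermartingale
  have hsuper : Supermartingale S ℱ μ := by
    refine supermartingale_of_condExp_sub_nonneg_nat hSadapted hSint fun i => ?_
    have h1 := condExp_sub (m := ℱ i) (hSint i) (hSint (i + 1))
    have h2 : μ[S i | ℱ i] = S i := condExp_of_stronglyMeasurable (ℱ.le i) (hSadapted i) (hSint i)
    filter_upwards [h1, hstep i] with ω e1 e2
    rw [Pi.zero_apply, e1]
    simp only [Pi.sub_apply]
    rw [h2]
    linarith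
  -- optional stopping
  set τ : Ω → ℕ := hittingBtwn f (Set.Ici y) 1 n with hτ_def
  set τ' : Ω → WithTop ℕ := fun ω => (τ ω : WithTop ℕ) with hτ'_def
  have hτ : IsStoppingTime ℱ τ' := hfadapted.adapted.isStoppingTime_hittingBtwn measurableSet_Ici
  have hτn : ∀ ω, τ ω ≤ n := fun ω => hittingBtwn_le ω
  have hSVint : Integrable (stoppedValue S τ') μ := integrable_stoppedValue ℕ hτ hSint (fun ω => WithTop.coe_le_coe.mpr (hτn ω))
  have hOST : ∫ ω, stoppedValue (-S) (fun _ => 0) ω ∂μ ≤ ∫ ω, stoppedValue (-S) τ' ω ∂μ :=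
    hsuper.neg.expected_stoppedValue_mono (isStoppingTime_const ℱ 0) hτ
      (fun ω => WithTop.coe_le_coe.mpr (Nat.zero_le _)) (fun ω => WithTop.coe_le_coe.mpr (hτn ω))
  have hSV1 : ∫ ω, stoppedValue S τ' ω ∂μ ≤ 1 := by
    have e0 : stoppedValue (-S) (fun _ => 0) = fun _ => (-1 : ℝ) := by
      funext ω
      show -S 0 ω = -1
      have : S 0 ω = Real.exp (l * f 0 ω - g * V 0 ω) := rfl
      rw [this]
      norm_num [hf_def, hV_def]
    have e1 : stoppedValue (-S) τ' = -stoppedValue S τ' := rfl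
    rw [e0, e1] at hOST
    rw [show (∫ ω, (-stoppedValue S τ') ω ∂μ) = -∫ ω, stoppedValue S τ' ω ∂μ from integral_neg _] at hOST
    have : ∫ (_ : Ω), (-1 : ℝ) ∂μ = -1 := by simp
    rw [this] at hOST
    linarith
  -- the event
  set A : Set Ω := {ω | ∃ k ∈ Finset.Icc 1 n, y ≤ f k ω} ∩ {ω | V n ω ≤ v} with hA_def
  have hAmeas : MeasurableSet A := by
    refine MeasurableSet.inter ?_ ?_
    · have : {ω | ∃ k ∈ Finset.Icc 1 n, y ≤ f k ω} =
          ⋃ k ∈ Finset.Icc 1 n, {ω | y ≤ f k ω} := by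
        ext ω; simp
      rw [this]
      exact MeasurableSet.biUnion (Finset.Icc 1 n).countable_toSet fun k _ =>
        measurableSet_le measurable_const ((hfadapted k).mono (ℱ.le k)).measurable
    · exact measurableSet_le ((hVmeas n n n.le_succ).mono (ℱ.le n)).measurable measurable_const
  have hAbound : ∀ᵐ ω ∂μ, ω ∈ A → Real.exp (l * y - g * v) ≤ stoppedValue S τ' ω := by
    filter_upwards [hXnn] with ω hX hωA
    obtain ⟨⟨k, hk, hky⟩, hVv⟩ := hωA
    rw [Finset.mem_Icc] at hk
    have hmem : ∃ j ∈ Set.Icc 1 n, f j ω ∈ Set.Ici y := ⟨k, Set.mem_Icc.mpr hk, hky⟩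
    have h1 : y ≤ f (τ ω) ω := stoppedValue_hittingBtwn_mem hmem
    have h2 : V (τ ω) ω ≤ v := by
      refine le_trans ?_ hVv
      exact Finset.sum_le_sum_of_subset_of_nonneg
        (Finset.Icc_subset_Icc_right (hτn ω)) fun i _ _ => hX i
    show Real.exp (l * y - g * v) ≤ S (τ ω) ω
    have : S (τ ω) ω = Real.exp (l * f (τ ω) ω - g * V (τ ω) ω) := rfl
    rw [this, Real.exp_le_exp]
    have ha : l * y ≤ l * f (τ ω) ω := mul_le_mul_of_nonneg_left h1 hl.le
    have hb : g * V (τ ω) ω ≤ g * v := mul_le_mul_of_nonneg_left h2 hg0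
    linarith
  -- putting it together
  have hmain : Real.exp (l * y - g * v) * (μ A).toReal ≤ 1 := by
    have c1 : Real.exp (l * y - g * v) * (μ A).toReal =
        ∫ ω in A, Real.exp (l * y - g * v) ∂μ := by
      rw [setIntegral_const]
      rw [smul_eq_mul, mul_comm]
      rfl
    rw [c1]
    have c2 : ∫ ω in A, Real.exp (l * y - g * v) ∂μ ≤ ∫ ω in A, stoppedValue S τ' ω ∂μ := by
      refine setIntegral_mono_ae_restrict (integrableOn_const (measure_lt_top μ A).ne)
        hSVint.integrableOn ?_
      exact (ae_restrict_iff' hAmeas).2 hAbound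
    have c3 : ∫ ω in A, stoppedValue S τ' ω ∂μ ≤ ∫ ω, stoppedValue S τ' ω ∂μ := by
      refine setIntegral_le_integral hSVint (ae_of_all _ fun ω => ?_)
      show (0:ℝ) ≤ S (τ ω) ω
      exact (Real.exp_pos _).le
    linarith
  have hfinal : (μ A).toReal ≤ Real.exp (g * v - l * y) := by
    have hE : 0 < Real.exp (l * y - g * v) := Real.exp_pos _
    have := (le_div_iff₀' hE).mpr hmain
    refine this.trans ?_
    rw [one_div, ← Real.exp_neg]
    apply le_of_eq
    congr 1
    ring
  refine le_trans hfinal ?_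
  apply le_of_eq
  congr 1
  have hgval : g = (y * c / v - L) / c ^ 2 := by rw [hg_def, hlc, hexpL]; ring
  rw [hgval, hl_def]
  field_simp
  ring
end
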